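/- arXiv:2101.12305 — 2 statements merged into one kernel-verified Lean document; each statement's English description precedes it below -/
import Mathlib

section
/- For the streaming join of two streams producing, for each pair of matching sgts, an output sgt with interval [max(ts1,ts2), min(exp1,exp2)) whenever the input intervals intersect, the join is snapshot-reducible: for every time t, the snapshot at t of the output equals the (non-streaming) join of the snapshots at t of the two inputs. -/
/-- A streaming graph tuple. -/
structure Sgt (V L D : Type*) where
  src : V
  trg : V
  lab : L
  ts  : ℕ
  exp : ℕ
  payload : D

/-- Distinguished attributes of an sgt. -/
def attrs {V L D : Type*} (x : Sgt V L D) : V × L × V := (x.src, x.lab, x.trg)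

/-- Snapshot at time `t` of a set of sgts. -/
def snapshot {V L D : Type*} (S : Set (Sgt V L D)) (t : ℕ) : Set (V × L × V) :=
  {e | ∃ x ∈ S, attrs x = e ∧ x.ts ≤ t ∧ t < x.exp}

/-- The streaming binary join: for each pair of sgts matching under `θ` whose
validity intervals intersect (`max ts < min exp`), output their pair of
distinguished attributes with validity interval `[max ts, min exp)`. -/
def sJoin {V L D : Type*} (θ : V × L × V → V × L × V → Prop)
    (S1 S2 : Set (Sgt V L D)) : Set ((V × L × V) × (V × L × V) × ℕ × ℕ) :=
  {p | ∃ x ∈ S1, ∃ y ∈ S2, θ (attrs x) (attrs y) ∧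
    max x.ts y.ts < min x.exp y.exp ∧
    p = (attrs x, attrs y, max x.ts y.ts, min x.exp y.exp)}

/-- Snapshot at `t` of a join output stream: matched pairs whose interval
contains `t`. -/
def joinSnapshot {V L : Type*} (O : Set ((V × L × V) × (V × L × V) × ℕ × ℕ))
    (t : ℕ) : Set ((V × L × V) × (V × L × V)) :=
  {p | ∃ a b : ℕ, (p.1, p.2, a, b) ∈ O ∧ a ≤ t ∧ t < b}

/-- The streaming join is snapshot-reducible: the snapshot at `t` of the output
equals the non-streaming join (pairs satisfying `θ`) of the snapshots at `t`
of the inputs. -/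
theorem join_snapshot_reducible {V L D : Type*}
    (θ : V × L × V → V × L × V → Prop) (S1 S2 : Set (Sgt V L D)) (t : ℕ) :
    joinSnapshot (sJoin θ S1 S2) t =
      {p : (V × L × V) × (V × L × V) |
        p.1 ∈ snapshot S1 t ∧ p.2 ∈ snapshot S2 t ∧ θ p.1 p.2} := by
  ext ⟨e1, e2⟩
  simp only [joinSnapshot, sJoin, snapshot, Set.mem_setOf_eq]
  constructor
  · rintro ⟨a, b, ⟨x, hx, y, hy, hθ, _, heq⟩, hat, htb⟩
    obtain ⟨rfl, rfl, rfl, rfl⟩ : e1 = attrs x ∧ e2 = attrs y ∧ a = max x.ts y.ts ∧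
        b = min x.exp y.exp := by
      simpa [Prod.ext_iff] using heq
    refine ⟨⟨x, hx, rfl, le_trans (le_max_left _ _) hat, lt_of_lt_of_le htb (min_le_left _ _)⟩,
      ⟨y, hy, rfl, le_trans (le_max_right _ _) hat, lt_of_lt_of_le htb (min_le_right _ _)⟩, hθ⟩
  · rintro ⟨⟨x, hx, rfl, hx1, hx2⟩, ⟨y, hy, rfl, hy1, hy2⟩, hθ⟩
    exact ⟨max x.ts y.ts, min x.exp y.exp,
      ⟨x, hx, y, hy, hθ, lt_of_le_of_lt (max_le hx1 hy1) (lt_min hx2 hy2), rfl⟩,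
      max_le hx1 hy1, lt_min hx2 hy2⟩
end

section
/- Spanning-tree invariant of S-PATH: if for every node (u,s) of a tree T_x the stored interval-start ts and a parent pointer satisfy that the root is (x, s0) and each non-root node (v,t) has parent (u,s) with an edge (u,l,v) valid on [ts', exp') where δ(s,l)=t, and the node's ts equals max(parent's ts, edge's ts) and exp equals min(parent's exp, edge's exp) with ts < exp, then following parent pointers from (v,t) to the root yields a path p from x to v in the snapshot graph at every time instant in [ts, exp), and δ*(s0, label(p)) = t. -/
/-- Possibly-empty labelled paths in a graph `E ⊆ V × Σ × V`. -/
inductive PathL {V L : Type*} (E : Set (V × L × V)) : V → List L → V → Prop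
  | nil (u : V) : PathL E u [] u
  | cons {u l w ls v} : (u, l, w) ∈ E → PathL E w ls v → PathL E u (l :: ls) v

/-- Snapshot at time `τ` of a streaming graph whose edges carry half-open
validity intervals `[a, b)`. -/
def snapE {V L : Type*} (E : Set (V × L × V × ℕ × ℕ)) (τ : ℕ) :
    Set (V × L × V) :=
  {e | ∃ a b : ℕ, (e.1, e.2.1, e.2.2, a, b) ∈ E ∧ a ≤ τ ∧ τ < b}


theorem PathL.snoc {V L : Type*} {E : Set (V × L × V)} {x u v : V} {w : List L}
    {l : L} (h : PathL E x w u) (he : (u, l, v) ∈ E) :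
    PathL E x (w ++ [l]) v := by
  induction h with
  | nil => exact PathL.cons he (PathL.nil v)
  | cons h1 _ ih => exact PathL.cons h1 (ih he)

/-- Spanning-tree invariant of S-PATH.  Given a DFA transition function `δ`,
start state `s0`, a streaming graph `E`, and a tree `T_x` of nodes
(vertex, state) with parent pointers `parent`, edge labels `elb`, node
intervals `[nts, nexp)` and a rank function witnessing well-foundedness:
if the root is `(x, s0)` and each non-root node `(v,t)` has its parent in the
tree (of smaller rank) connected by an edge `((parent).1, l, v)` of `E` valid
on `[a, b)` with `δ (parent).2 l = t`, with the node's interval computed as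
`ts = max (parent.ts) a`, `exp = min (parent.exp) b` and `ts < exp`, then
following parent pointers from any node `(v,t)` to the root yields a path `p`
from `x` to `v` in the snapshot graph at every time instant in `[ts, exp)`
with `δ*(s0, label p) = t`. -/
theorem spath_tree_invariant {V L Q : Type*}
    (E : Set (V × L × V × ℕ × ℕ)) (δ : Q → L → Q) (x : V) (s0 : Q)
    (T : Set (V × Q)) (parent : V × Q → V × Q) (elb : V × Q → L)
    (nts nexp : V × Q → ℕ) (rank : V × Q → ℕ)
    (hroot : (x, s0) ∈ T)
    (hnode : ∀ n ∈ T, n ≠ (x, s0) →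
      parent n ∈ T ∧ rank (parent n) < rank n ∧
      ∃ a b : ℕ, ((parent n).1, elb n, n.1, a, b) ∈ E ∧
        δ (parent n).2 (elb n) = n.2 ∧
        nts n = max (nts (parent n)) a ∧
        nexp n = min (nexp (parent n)) b ∧
        nts n < nexp n) :
    ∀ n ∈ T, ∀ τ : ℕ, nts n ≤ τ → τ < nexp n →
      ∃ w : List L, PathL (snapE E τ) x w n.1 ∧ List.foldl δ s0 w = n.2 := by
  suffices h : ∀ k : ℕ, ∀ n ∈ T, rank n = k → ∀ τ : ℕ, nts n ≤ τ → τ < nexp n →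
      ∃ w : List L, PathL (snapE E τ) x w n.1 ∧ List.foldl δ s0 w = n.2 by
    intro n hn; exact h (rank n) n hn rfl
  intro k
  induction k using Nat.strong_induction_on with
  | _ k ih =>
  intro n hn hk τ hτ1 hτ2
  by_cases hne : n = (x, s0)
  · subst hne
    exact ⟨[], PathL.nil x, rfl⟩
  · obtain ⟨hpT, hrk, a, b, hE, hδ, hts, hexp, _⟩ := hnode n hn hne
    obtain ⟨w, hw, hfold⟩ := ih _ (hk ▸ hrk) _ hpT rfl τ
      (le_trans (hts ▸ le_max_left _ _) hτ1)
      (lt_of_lt_of_le hτ2 (hexp ▸ min_le_left _ _))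
    refine ⟨w ++ [elb n], hw.snoc ⟨a, b, hE,
      le_trans (hts ▸ le_max_right _ _) hτ1,
      lt_of_lt_of_le hτ2 (hexp ▸ min_le_right _ _)⟩, ?_⟩
    rw [List.foldl_append, hfold, List.foldl_cons, List.foldl_nil, hδ]
end
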